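/- Let A be a commutative Banach algebra and σ ∈ Hom(A) with dense range. If A is σ-weakly amenable, then for every commutative Banach A-module E (i.e., a·x = x·a for all a ∈ A, x ∈ E), every σ-derivation D : A → E is zero. -/
import Mathlib


/-- `σ`-weak amenability of a Banach algebra `B`. -/
def SigmaWeaklyAmenable (B : Type u) [NonUnitalNormedRing B] [NormedSpace ℂ B]
    (s : B → B) : Prop :=
  ∀ D : B →L[ℂ] (B →L[ℂ] ℂ),
    (∀ a b x, D (a * b) x = D a (s b * x) + D b (x * s a)) →
    ∃ Λ : B →L[ℂ] ℂ, ∀ a x, D a x = Λ (x * s a) - Λ (s a * x)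

/-- if `A` is a commutative Banach algebra, `σ ∈ Hom(A)` has dense
range and `A` is `σ`-weakly amenable, then for every commutative Banach
`A`-module `E` (given by a continuous bilinear associative action `m`), every
`σ`-derivation `D : A → E` is zero. -/
theorem stmt8 {A : Type u} [NonUnitalNormedRing A] [NormedSpace ℂ A]
    [IsScalarTower ℂ A A] [SMulCommClass ℂ A A] [CompleteSpace A]
    (hcomm : ∀ a b : A, a * b = b * a)
    (σ : A →L[ℂ] A) (hσ : ∀ a b : A, σ (a * b) = σ a * σ b)
    (hdense : DenseRange σ) (hwa : SigmaWeaklyAmenable A σ)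
    (E : Type u) [NormedAddCommGroup E] [NormedSpace ℂ E] [CompleteSpace E]
    (m : A →L[ℂ] E →L[ℂ] E) (hm : ∀ a b x, m (a * b) x = m a (m b x))
    (D : A →L[ℂ] E)
    (hD : ∀ a b : A, D (a * b) = m (σ a) (D b) + m (σ b) (D a)) :
    D = 0 := by
  -- Key lemma: any continuous functional on A vanishing on products is zero.
  have key : ∀ f : A →L[ℂ] ℂ, (∀ a b : A, f (a * b) = 0) → f = 0 := by
    intro f hf
    obtain ⟨Λ, hΛ⟩ := hwa (f.smulRight f) (by
      intro a b x
      simp [hf, smul_eq_mul])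
    ext x
    have h := hΛ x x
    rw [hcomm, sub_self] at h
    simp only [ContinuousLinearMap.smulRight_apply, smul_eq_mul] at h
    have : f x = 0 := by
      have := mul_self_eq_zero.mp h
      exact this
    simpa using this
  -- Step 1: m x (D a) = 0 for all a x.
  have step1 : ∀ (a x : A), m x (D a) = 0 := by
    intro a x
    apply NormedSpace.eq_zero_of_forall_dual_eq_zero ℂ
    intro φ
    set Dφ : A →L[ℂ] (A →L[ℂ] ℂ) :=
      ((ContinuousLinearMap.compL ℂ A E ℂ φ).comp m.flip).comp D with hDφ
    have happ : ∀ a x : A, Dφ a x = φ (m x (D a)) := by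
      intro a x
      simp [hDφ]
    obtain ⟨Λ, hΛ⟩ := hwa Dφ (by
      intro a b x
      rw [happ, happ, happ, hD a b]
      rw [map_add, map_add]
      rw [hcomm (σ b) x, hm x (σ a), hm x (σ b)]
      ring)
    have h := hΛ a x
    rw [happ] at h
    rw [hcomm (σ a) x, sub_self] at h
    exact h
  -- Step 2: D vanishes on products.
  have step2 : ∀ a b : A, D (a * b) = 0 := by
    intro a b
    rw [hD a b, step1, step1, add_zero]
  -- Step 3: for every functional ψ on E, ψ ∘ D vanishes, hence D = 0.
  ext a
  apply NormedSpace.eq_zero_of_forall_dual_eq_zero ℂ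
  intro ψ
  have : ψ.comp D = 0 := key (ψ.comp D) (by intro a b; simp [step2])
  simpa using congrFun (congrArg DFunLike.coe this) a
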